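/- arXiv:1105.1325 — 8 statements merged into one kernel-verified Lean document; each statement's English description precedes it below -/
import Mathlib

section
/- A function f: F_2^n → {0,1} is odd-cycle-free (i.e., there are no odd k and x_1,...,x_k with f(x_i)=1 for all i and x_1+...+x_k=0) if and only if there exists α ∈ F_2^n such that α·x = 1 for every x in the support of f. -/
open Finset
open scoped Classical

abbrev V (n : ℕ) : Type := Fin n → ZMod 2

def dotp {n : ℕ} (α x : V n) : ZMod 2 := ∑ i, α i * x i

def IsBool {n : ℕ} (f : V n → ℝ) : Prop := ∀ x, f x = 0 ∨ f x = 1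

/-- `f` is odd-cycle-free: no odd `k` and `x_1,…,x_k` in the support summing to `0`. -/
def OCF {n : ℕ} (f : V n → ℝ) : Prop :=
  ∀ k : ℕ, Odd k → ¬ ∃ x : Fin k → V n, (∀ i, f (x i) = 1) ∧ (∑ i, x i) = 0

noncomputable def fhat {n : ℕ} (f : V n → ℝ) (α : V n) : ℝ :=
  (∑ x : V n, f x * (-1 : ℝ) ^ (dotp α x).val) / 2 ^ n

/-- `f` is `ε`-far from odd-cycle-free: every Boolean OCF function differs from `f`
on at least `ε·2^n` points. -/
def FarFromOCF {n : ℕ} (ε : ℝ) (f : V n → ℝ) : Prop :=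
  ∀ g : V n → ℝ, IsBool g → OCF g →
    ε * 2 ^ n ≤ ((Finset.univ.filter fun x => f x ≠ g x).card : ℝ)

private lemma zmod2_eq_one : ∀ a : ZMod 2, a ≠ 0 → a = 1 := by decide

private lemma addself {n : ℕ} (v : V n) : v + v = 0 := by
  funext i
  show v i + v i = 0
  rw [← two_mul]
  have : (2 : ZMod 2) = 0 := by decide
  rw [this, zero_mul]

private lemma nsmul_even {n : ℕ} (v : V n) {m : ℕ} (hm : Even m) : m • v = 0 := by
  obtain ⟨l, rfl⟩ := hm
  rw [add_nsmul, addself]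

private lemma nsmul_odd {n : ℕ} (v : V n) {m : ℕ} (hm : Odd m) : m • v = v := by
  obtain ⟨l, rfl⟩ := hm
  rw [add_nsmul, one_nsmul, nsmul_even v (even_two_mul l), zero_add]

private lemma dotp_linear {n : ℕ} (ψ : V n →ₗ[ZMod 2] ZMod 2) (x : V n) :
    dotp (fun i => ψ (Pi.single i 1)) x = ψ x := by
  unfold dotp
  have hx : x = ∑ i, x i • Pi.single i (1 : ZMod 2) := by
    funext j
    simp [Pi.single_apply, Finset.sum_apply]
  conv_rhs => rw [hx]
  rw [map_sum]
  refine Finset.sum_congr rfl fun i _ => ?_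
  rw [map_smul, smul_eq_mul, mul_comm]

theorem stmt0 {n : ℕ} (f : V n → ℝ) (hf : IsBool f) :
    OCF f ↔ ∃ α : V n, ∀ x : V n, f x = 1 → dotp α x = 1 := by
  constructor
  · intro hOCF
    by_cases hS : ∃ s0, f s0 = 1
    · obtain ⟨s0, hs0⟩ := hS
      set T : Set (V n) := {t | f (t + s0) = 1} with hTdef
      set W : Submodule (ZMod 2) (V n) := Submodule.span (ZMod 2) T with hWdef
      have hs0W : s0 ∉ W := by
        intro hmem
        rw [hWdef, Submodule.mem_span_set] at hmem
        obtain ⟨c, hcsupp, hcsum⟩ := hmem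
        -- the sum is over the support, where coefficients are 1
        have hcoef : ∀ t ∈ c.support, c t • t = t := by
          intro t ht
          have h1 : c t ≠ 0 := Finsupp.mem_support_iff.mp ht
          have : c t = 1 := zmod2_eq_one _ h1
          rw [this, one_smul]
        have hsum : ∑ t ∈ c.support, t = s0 := by
          rw [← hcsum, Finsupp.sum]
          exact (Finset.sum_congr rfl hcoef).symm
        set u := c.support with hu
        set m := u.card with hm
        have hmemT : ∀ t ∈ u, f (t + s0) = 1 := fun t ht => hcsupp ht
        -- sum over u of (t + s0) = s0 + m • s0
        have key : ∑ t ∈ u, (t + s0) = s0 + m • s0 := by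
          rw [Finset.sum_add_distrib, Finset.sum_const, hsum, ← hm]
        rcases Nat.even_or_odd m with he | ho
        · -- use k = m + 1, elements: s0 and (t + s0) for t ∈ u
          refine hOCF (m + 1) (Even.add_one he) ⟨Fin.cons s0
            (fun j => (u.equivFin.symm j : V n) + s0), ?_, ?_⟩
          · intro i
            refine Fin.cases ?_ ?_ i
            · simpa using hs0
            · intro j
              exact hmemT _ (u.equivFin.symm j).2
          · rw [Fin.sum_univ_succ]
            simp only [Fin.cons_zero, Fin.cons_succ]
            have : ∑ j : Fin m, ((u.equivFin.symm j : V n) + s0)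
                = ∑ t ∈ u, (t + s0) := by
              rw [← Finset.sum_attach u (fun t => t + s0)]
              exact Fintype.sum_equiv u.equivFin.symm _ _ (fun j => rfl)
            rw [this, key, nsmul_even _ he, add_zero, addself]
        · refine hOCF m ho ⟨fun j => (u.equivFin.symm j : V n) + s0, ?_, ?_⟩
          · intro j
            exact hmemT _ (u.equivFin.symm j).2
          · have : ∑ j : Fin m, ((u.equivFin.symm j : V n) + s0)
                = ∑ t ∈ u, (t + s0) := by
              rw [← Finset.sum_attach u (fun t => t + s0)]
              exact Fintype.sum_equiv u.equivFin.symm _ _ (fun j => rfl)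
            rw [this, key, nsmul_odd _ ho, addself]
      -- get a dual functional
      have hq : (Submodule.Quotient.mk s0 : V n ⧸ W) ≠ 0 := by
        intro h
        exact hs0W ((Submodule.Quotient.mk_eq_zero W).mp h)
      obtain ⟨φ, hφ⟩ : ∃ φ : Module.Dual (ZMod 2) (V n ⧸ W),
          φ (Submodule.Quotient.mk s0) ≠ 0 := by
        by_contra hcon
        push_neg at hcon
        exact hq ((Module.forall_dual_apply_eq_zero_iff (ZMod 2) _).mp hcon)
      set ψ : V n →ₗ[ZMod 2] ZMod 2 := φ.comp W.mkQ with hψdef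
      have hψW : ∀ w ∈ W, ψ w = 0 := by
        intro w hw
        have : W.mkQ w = 0 := (Submodule.Quotient.mk_eq_zero W).mpr hw
        simp [hψdef, this]
      have hψs0 : ψ s0 = 1 := zmod2_eq_one _ hφ
      refine ⟨fun i => ψ (Pi.single i 1), fun x hx => ?_⟩
      rw [dotp_linear]
      have hxT : x + s0 ∈ W := by
        apply Submodule.subset_span
        show f (x + s0 + s0) = 1
        rw [add_assoc, addself, add_zero]
        exact hx
      have : ψ x = ψ (x + s0) + ψ s0 := by
        rw [← map_add, add_assoc, addself, add_zero]
      rw [this, hψW _ hxT, zero_add, hψs0]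
    · push_neg at hS
      exact ⟨0, fun x hx => absurd hx (by simpa using hS x)⟩
  · rintro ⟨α, hα⟩ k hk ⟨x, hx1, hx0⟩
    have hdot : dotp α (∑ i, x i) = ∑ i : Fin k, dotp α (x i) := by
      unfold dotp
      rw [Finset.sum_comm]
      refine Finset.sum_congr rfl fun i _ => ?_
      rw [← Finset.mul_sum]
      simp [Finset.sum_apply]
    have h1 : ∑ i : Fin k, dotp α (x i) = (k : ZMod 2) := by
      rw [Finset.sum_congr rfl fun i _ => hα _ (hx1 i)]
      simp
    have hkodd : (k : ZMod 2) = 1 := by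
      obtain ⟨l, rfl⟩ := hk
      push_cast
      have : (2 : ZMod 2) = 0 := by decide
      rw [this, zero_mul, zero_add]
    have h0 : dotp α (∑ i, x i) = 0 := by
      rw [hx0]
      simp [dotp]
    rw [hdot, h1, hkodd] at h0
    exact absurd h0 (by decide)
end

section
/- If f: F_2^n → {0,1} is odd-cycle-free and not identically zero, then the set H' = {x_1+...+x_k : x_1,...,x_k ∈ supp(f), k ≥ 0 even} is an F_2-linear subspace of span(supp(f)) of codimension 1, and H' ∩ supp(f) = ∅. -/
open Finset
open scoped Classical

/-!
Over `𝔽₂` every element of `span S` is a sum of some number `k` of elements of `S`, and the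
sums with `k` even form a subspace `E`. Write `O` for the sums with `k` odd, so that
`span S = E ∪ O`, `O + O ⊆ E` and `E + S ⊆ O`. Odd-cycle-freeness says `0 ∉ O`; then no
`s ∈ S` lies in `E`, since `s + s = 0` would be an odd sum. If `v ∈ O`, every `y ∈ O` equals
`(y + v) + v` with `y + v ∈ E`, so `E` has codimension one in `span S`.
-/

section SumsOfElements

variable {G : Type*} [AddCommMonoid G]

def IsSumOf (S : Set G) (k : ℕ) (y : G) : Prop :=
  ∃ x : Fin k → G, (∀ i, x i ∈ S) ∧ ∑ i, x i = y

variable {S : Set G}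

theorem IsSumOf.zero : IsSumOf S 0 0 :=
  ⟨Fin.elim0, fun i => i.elim0, Finset.sum_empty⟩

theorem IsSumOf.single {s : G} (hs : s ∈ S) : IsSumOf S 1 s :=
  ⟨fun _ => s, fun _ => hs, by simp⟩

theorem IsSumOf.add {k m : ℕ} {y z : G} (hy : IsSumOf S k y) (hz : IsSumOf S m z) :
    IsSumOf S (k + m) (y + z) := by
  obtain ⟨x, hxS, rfl⟩ := hy
  obtain ⟨x', hx'S, rfl⟩ := hz
  refine ⟨Fin.append x x', fun i => ?_, by simp [Fin.sum_univ_add]⟩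
  refine i.addCases (fun j => ?_) (fun j => ?_)
  · simpa using hxS j
  · simpa using hx'S j

theorem IsSumOf.mem_span {R : Type*} [Semiring R] [Module R G] {k : ℕ} {y : G}
    (hy : IsSumOf S k y) : y ∈ Submodule.span R S := by
  obtain ⟨x, hxS, rfl⟩ := hy
  exact Submodule.sum_mem _ fun i _ => Submodule.subset_span (hxS i)

end SumsOfElements

section EvenSums

variable {G : Type*} [AddCommGroup G] [Module (ZMod 2) G] {S : Set G}

theorem exists_isSumOf_of_mem_span {y : G} (hy : y ∈ Submodule.span (ZMod 2) S) :
    ∃ k, IsSumOf S k y := by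
  induction hy using Submodule.span_induction with
  | mem s hs => exact ⟨1, .single hs⟩
  | zero => exact ⟨0, .zero⟩
  | add y z _ _ hy hz =>
    obtain ⟨k, hk⟩ := hy
    obtain ⟨m, hm⟩ := hz
    exact ⟨k + m, hk.add hm⟩
  | smul c y _ hy =>
    obtain rfl | rfl : c = 0 ∨ c = 1 := by revert c; decide
    · exact ⟨0, by simpa using IsSumOf.zero⟩
    · simpa using hy

variable (S) in
def evenSums : Submodule (ZMod 2) G where
  carrier := {y | ∃ k, Even k ∧ IsSumOf S k y}
  zero_mem' := ⟨0, Even.zero, .zero⟩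
  add_mem' := fun ⟨k, hk, hy⟩ ⟨m, hm, hz⟩ => ⟨k + m, hk.add hm, hy.add hz⟩
  smul_mem' c y hy := by
    obtain rfl | rfl : c = 0 ∨ c = 1 := by revert c; decide
    · exact ⟨0, Even.zero, by simpa using IsSumOf.zero⟩
    · simpa using hy

theorem evenSums_le_span : evenSums S ≤ Submodule.span (ZMod 2) S :=
  fun _ ⟨_, _, hy⟩ => hy.mem_span

theorem notMem_evenSums_of_mem (hS : ∀ k, Odd k → ¬ IsSumOf S k 0) {s : G} (hs : s ∈ S) :
    s ∉ evenSums S := by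
  rintro ⟨k, hk, hsk⟩
  exact hS (1 + k) (odd_one.add_even hk) (ZModModule.add_self s ▸ (IsSumOf.single hs).add hsk)

theorem exists_odd_isSumOf_of_notMem_evenSums {v : G} (hv : v ∈ Submodule.span (ZMod 2) S)
    (hvE : v ∉ evenSums S) : ∃ k, Odd k ∧ IsSumOf S k v := by
  obtain ⟨k, hk⟩ := exists_isSumOf_of_mem_span hv
  exact ⟨k, Nat.not_even_iff_odd.mp fun he => hvE ⟨k, he, hk⟩, hk⟩

theorem evenSums_sup_span_singleton {v : G} (hv : v ∈ Submodule.span (ZMod 2) S)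
    (hvE : v ∉ evenSums S) :
    evenSums S ⊔ Submodule.span (ZMod 2) {v} = Submodule.span (ZMod 2) S := by
  refine le_antisymm (sup_le evenSums_le_span ((Submodule.span_singleton_le_iff_mem _ _).mpr hv))
    fun y hy => ?_
  obtain ⟨m, hm, hmv⟩ := exists_odd_isSumOf_of_notMem_evenSums hv hvE
  obtain ⟨k, hky⟩ := exists_isSumOf_of_mem_span hy
  rcases Nat.even_or_odd k with hk | hk
  · exact Submodule.mem_sup_left ⟨k, hk, hky⟩
  · have hyv : y + v ∈ evenSums S := ⟨k + m, hk.add_odd hm, hky.add hmv⟩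
    have : y = (y + v) + v := by rw [add_assoc, ZModModule.add_self, add_zero]
    rw [this]
    exact Submodule.add_mem_sup hyv (Submodule.mem_span_singleton_self v)

end EvenSums

theorem stmt1_general {n : ℕ} (f : V n → ℝ) (hocf : OCF f) :
    ∃ H' : Submodule (ZMod 2) (V n),
      (↑H' : Set (V n)) =
        {y | ∃ (k : ℕ) (x : Fin k → V n), Even k ∧ (∀ i, f (x i) = 1) ∧ y = ∑ i, x i} ∧
      H' ≤ Submodule.span (ZMod 2) {x | f x = 1} ∧
      (∀ x, f x = 1 → x ∉ H') ∧
      (∀ v ∈ Submodule.span (ZMod 2) {x | f x = 1}, v ∉ H' →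
        H' ⊔ Submodule.span (ZMod 2) {v} = Submodule.span (ZMod 2) {x | f x = 1}) := by
  refine ⟨evenSums {x | f x = 1}, ?_, evenSums_le_span,
    fun x hx => notMem_evenSums_of_mem (S := {x | f x = 1}) hocf hx,
    fun v hv hvE => evenSums_sup_span_singleton hv hvE⟩
  exact Set.ext fun y => ⟨fun ⟨k, hk, x, hx, hxy⟩ => ⟨k, x, hk, hx, hxy.symm⟩,
    fun ⟨k, x, hk, hx, hxy⟩ => ⟨k, hk, x, hx, hxy.symm⟩⟩

theorem stmt1 {n : ℕ} (f : V n → ℝ) (hf : IsBool f) (hocf : OCF f)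
    (hnz : ∃ x, f x = 1) :
    ∃ H' : Submodule (ZMod 2) (V n),
      (↑H' : Set (V n)) =
        {y | ∃ (k : ℕ) (x : Fin k → V n), Even k ∧ (∀ i, f (x i) = 1) ∧ y = ∑ i, x i} ∧
      H' ≤ Submodule.span (ZMod 2) {x | f x = 1} ∧
      (∀ x, f x = 1 → x ∉ H') ∧
      (∀ v ∈ Submodule.span (ZMod 2) {x | f x = 1}, v ∉ H' →
        H' ⊔ Submodule.span (ZMod 2) {v} = Submodule.span (ZMod 2) {x | f x = 1}) :=
  stmt1_general f hocf
end

section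
/- A function f: F_2^n → {0,1} is ε-far from odd-cycle-free if and only if every linear subspace of F_2^n of dimension n−1 contains at least ε·2^n elements of supp(f). Equivalently, for every α ∈ F_2^n, at least ε·2^n points x ∈ supp(f) satisfy α·x = 0. -/
open Finset
open scoped Classical

/-! Odd-cycle-freeness is a duality statement: a family `v` in an `F₂`-space has no odd subfamily
summing to `0` iff `(0, 1) ∉ span {(vᵢ, 1)}` in `W × F₂`, iff some functional is `1` on every `vᵢ`.
So the maximal odd-cycle-free functions below `f` are its restrictions to the sets `{φ = 1}`,
at distance `#{x ∈ supp f | φ x = 0}` from `f`; and the kernels of nonzero functionals are exactly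
the subspaces of dimension `n - 1`, while `ker 0 = ⊤` contains all of them. -/

open Module

section DualEqOne

variable {K W ι : Type*} [Field K] [AddCommGroup W] [Module K W] [Fintype ι]

theorem exists_dual_forall_eq_one_iff (v : ι → W) :
    (∃ φ : Dual K W, ∀ i, φ (v i) = 1) ↔ ∀ c : ι → K, ∑ i, c i • v i = 0 → ∑ i, c i = 0 := by
  constructor
  · rintro ⟨φ, hφ⟩ c hc
    simpa [hφ] using congr_arg φ hc
  · intro h
    have hnot : ((0 : W), (1 : K)) ∉ Submodule.span K (Set.range fun i => (v i, (1 : K))) := by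
      rw [Submodule.mem_span_range_iff_exists_fun]
      rintro ⟨c, hc⟩
      have hc1 : ∑ i, c i • v i = 0 := by simpa [Prod.fst_sum] using congr_arg Prod.fst hc
      have hc2 : ∑ i, c i = 1 := by simpa [Prod.snd_sum] using congr_arg Prod.snd hc
      exact zero_ne_one ((h c hc1).symm.trans hc2)
    obtain ⟨ψ, hψ1, hψ⟩ := Submodule.exists_dual_map_eq_bot_of_notMem hnot inferInstance
    refine ⟨-(ψ (0, 1))⁻¹ • ψ ∘ₗ LinearMap.inl K W K, fun i => ?_⟩
    have hi : ψ (v i, 1) = 0 := by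
      rw [← Submodule.mem_bot K, ← hψ]
      exact Submodule.mem_map_of_mem (Submodule.subset_span ⟨i, rfl⟩)
    have hsplit : ψ (v i, 1) = ψ (v i, 0) + ψ (0, 1) := by
      rw [← map_add, Prod.mk_add_mk, add_zero, zero_add]
    simp only [LinearMap.smul_apply, LinearMap.comp_apply, LinearMap.inl_apply, smul_eq_mul]
    field_simp
    linear_combination hsplit - hi

end DualEqOne

theorem ZMod.two_eq_zero_or_eq_one (a : ZMod 2) : a = 0 ∨ a = 1 := by
  revert a
  decide

theorem ZMod.forall_fun_two_iff_forall_finset {ι : Type*} [Fintype ι] {P : (ι → ZMod 2) → Prop} :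
    (∀ c, P c) ↔ ∀ s : Finset ι, P fun i => if i ∈ s then 1 else 0 := by
  refine ⟨fun h s => h _, fun h c => ?_⟩
  convert h (univ.filter fun i => c i ≠ 0) using 1
  funext i
  rcases ZMod.two_eq_zero_or_eq_one (c i) with hc | hc <;> simp [hc]

theorem exists_dual_forall_eq_one_iff_zmod_two {W ι : Type*} [AddCommGroup W] [Module (ZMod 2) W]
    [Fintype ι] (v : ι → W) :
    (∃ φ : Dual (ZMod 2) W, ∀ i, φ (v i) = 1) ↔ ∀ s : Finset ι, ∑ i ∈ s, v i = 0 → Even s.card := by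
  rw [exists_dual_forall_eq_one_iff, ZMod.forall_fun_two_iff_forall_finset]
  simp [ite_smul, Finset.sum_ite_mem, ZMod.natCast_eq_zero_iff_even]

theorem ocf_iff_exists_dual {n : ℕ} (g : V n → ℝ) :
    OCF g ↔ ∃ φ : Dual (ZMod 2) (V n), ∀ x, g x = 1 → φ x = 1 := by
  constructor
  · intro hg
    have := (exists_dual_forall_eq_one_iff_zmod_two (Subtype.val : {x // g x = 1} → V n)).2
    simp only [Subtype.forall] at this
    refine this fun s hs => Nat.not_odd_iff_even.1 fun hodd => hg _ hodd ?_
    refine ⟨fun j => s.equivFin.symm j, fun j => (s.equivFin.symm j : {x // g x = 1}).2, ?_⟩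
    rw [Equiv.sum_comp s.equivFin.symm (fun i => ((i : {x // g x = 1}) : V n)),
      Finset.sum_coe_sort s, hs]
  · rintro ⟨φ, hφ⟩ k hk ⟨x, hx, hsum⟩
    have := congr_arg φ hsum
    simp [map_sum, hφ _ (hx _), ZMod.natCast_eq_one_iff_odd.2 hk] at this

theorem farFromOCF_iff_forall_dual {n : ℕ} {f : V n → ℝ} (hf : IsBool f) (ε : ℝ) :
    FarFromOCF ε f ↔ ∀ φ : Dual (ZMod 2) (V n),
      ε * 2 ^ n ≤ ((univ.filter fun x => f x = 1 ∧ x ∈ LinearMap.ker φ).card : ℝ) := by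
  constructor
  · intro hfar φ
    set g : V n → ℝ := fun x => if φ x = 1 then f x else 0
    have hgb : IsBool g := fun x => by
      by_cases h : φ x = 1 <;> simp [g, h, hf x]
    have hgo : OCF g := (ocf_iff_exists_dual g).2
      ⟨φ, fun x hx => by_contra fun h => by simp [g, h] at hx⟩
    convert hfar g hgb hgo using 4 with x
    rcases ZMod.two_eq_zero_or_eq_one (φ x) with h | h <;> rcases hf x with h' | h' <;>
      simp [g, h, h']
  · intro h g hgb hgo
    obtain ⟨φ, hφ⟩ := (ocf_iff_exists_dual g).1 hgo
    refine (h φ).trans (Nat.cast_le.2 (card_le_card fun x => ?_))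
    simp only [mem_filter, mem_univ, true_and, LinearMap.mem_ker]
    rintro ⟨hfx, hφx⟩
    rcases hgb x with hgx | hgx
    · simp [hfx, hgx]
    · exact absurd (hφ x hgx) (by simp [hφx])

section Hyperplanes

variable {K W : Type*} [Field K] [AddCommGroup W] [Module K W] [FiniteDimensional K W]

theorem Submodule.exists_dual_ker_eq_of_finrank_eq_sub_one {H : Submodule K W}
    (hH : finrank K H = finrank K W - 1) : ∃ φ : Dual K W, LinearMap.ker φ = H := by
  by_cases htop : H = ⊤
  · exact ⟨0, by rw [LinearMap.ker_zero, htop]⟩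
  obtain ⟨φ, hφ, hφH⟩ :=
    Submodule.exists_dual_map_eq_bot_of_lt_top (lt_top_iff_ne_top.2 htop) inferInstance
  refine ⟨φ, (Submodule.eq_of_le_of_finrank_eq (LinearMap.le_ker_iff_map.2 hφH) ?_).symm⟩
  have := φ.finrank_ker_add_one_of_ne_zero hφ
  omega

theorem Module.Dual.exists_finrank_eq_sub_one_le_ker (φ : Dual K W) :
    ∃ H : Submodule K W, finrank K H = finrank K W - 1 ∧ H ≤ LinearMap.ker φ := by
  have of_ne_zero {ψ : Dual K W} (hψ : ψ ≠ 0) : finrank K (LinearMap.ker ψ) = finrank K W - 1 := by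
    have := ψ.finrank_ker_add_one_of_ne_zero hψ
    omega
  by_cases hφ : φ = 0
  · subst hφ
    rcases (finrank K W).eq_zero_or_pos with h | h
    · exact ⟨⊤, by simp [h], by simp⟩
    · have := Module.nontrivial_of_finrank_pos h
      obtain ⟨ψ, hψ⟩ := exists_ne (0 : Dual K W)
      exact ⟨LinearMap.ker ψ, of_ne_zero hψ, by simp⟩
  · exact ⟨LinearMap.ker φ, of_ne_zero hφ, le_rfl⟩

theorem forall_finrank_eq_sub_one_iff_forall_ker {P : Submodule K W → Prop} (hP : Monotone P) :
    (∀ H : Submodule K W, finrank K H = finrank K W - 1 → P H) ↔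
      ∀ φ : Dual K W, P (LinearMap.ker φ) := by
  constructor
  · intro h φ
    obtain ⟨H, hH, hle⟩ := φ.exists_finrank_eq_sub_one_le_ker
    exact hP hle (h H hH)
  · intro h H hH
    obtain ⟨φ, rfl⟩ := H.exists_dual_ker_eq_of_finrank_eq_sub_one hH
    exact h φ

end Hyperplanes

theorem stmt2 {n : ℕ} (f : V n → ℝ) (hf : IsBool f) (ε : ℝ) :
    (FarFromOCF ε f ↔
      ∀ H : Submodule (ZMod 2) (V n), Module.finrank (ZMod 2) H = n - 1 →
        ε * 2 ^ n ≤ ((Finset.univ.filter fun x => f x = 1 ∧ x ∈ H).card : ℝ)) ∧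
    (FarFromOCF ε f ↔
      ∀ α : V n,
        ε * 2 ^ n ≤ ((Finset.univ.filter fun x => f x = 1 ∧ dotp α x = 0).card : ℝ)) := by
  have hdual := farFromOCF_iff_forall_dual hf ε
  have hmono : Monotone fun H : Submodule (ZMod 2) (V n) =>
      ε * 2 ^ n ≤ ((univ.filter fun x => f x = 1 ∧ x ∈ H).card : ℝ) := fun _ _ hle h =>
    h.trans <| Nat.cast_le.2 <| card_le_card <|
      monotone_filter_right _ fun x _ => And.imp_right (@hle x)
  refine ⟨?_, ?_⟩
  · rw [hdual, ← forall_finrank_eq_sub_one_iff_forall_ker hmono, finrank_fin_fun]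
  · rw [hdual, ← (dotProductEquiv (ZMod 2) (Fin n)).toEquiv.forall_congr_right]
    simp only [LinearEquiv.coe_toEquiv, LinearMap.mem_ker, dotProductEquiv_apply_apply]
    exact Iff.rfl
end

section
/- A function f: F_2^n → {0,1} is odd-cycle-free if and only if there exists α ∈ F_2^n with f̂(α) = −ρ, where ρ = f̂(0) is the density of f. -/
open Finset
open scoped Classical

lemma dotp_sum {n k : ℕ} (α : V n) (x : Fin k → V n) :
    dotp α (∑ i, x i) = ∑ i, dotp α (x i) := by
  unfold dotp
  rw [Finset.sum_comm]
  congr 1; ext i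
  simp [Finset.mul_sum]

lemma dotp_linear_s3 {n : ℕ} (α : V n) : IsLinearMap (ZMod 2) (dotp α) := by
  constructor
  · intro x y; unfold dotp; rw [← Finset.sum_add_distrib]; congr 1; ext i; ring_nf; simp [mul_add]
  · intro c x; unfold dotp; simp only [Pi.smul_apply, smul_eq_mul, Finset.mul_sum]; congr 1; ext i; ring

lemma val_one_zmod2 : (1 : ZMod 2).val = 1 := by decide

lemma eq_one_of_val {d : ZMod 2} (h : d.val = 1) : d = 1 := by revert d; decide

lemma fhat_neg_iff {n : ℕ} (f : V n → ℝ) (hf : IsBool f) (α : V n) :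
    fhat f α = - fhat f 0 ↔ ∀ x, f x = 1 → dotp α x = 1 := by
  have h2 : ((2:ℝ) ^ n) ≠ 0 := by positivity
  have h0 : fhat f 0 = (∑ x : V n, f x) / 2 ^ n := by
    unfold fhat
    congr 1
    apply Finset.sum_congr rfl
    intro x _
    have hd : dotp (0 : V n) x = 0 := by unfold dotp; simp
    rw [hd]
    simp [ZMod.val_zero]
  rw [h0]
  unfold fhat
  rw [← neg_div, div_eq_div_iff h2 h2,
    mul_left_inj' h2]
  have hiff : (∑ x : V n, f x * (-1:ℝ) ^ (dotp α x).val) = -(∑ x : V n, f x) ↔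
      (∑ x : V n, (f x * (-1:ℝ) ^ (dotp α x).val + f x)) = 0 := by
    rw [Finset.sum_add_distrib]
    constructor <;> intro h <;> linarith
  rw [hiff]
  have hnn : ∀ x ∈ (Finset.univ : Finset (V n)),
      (0:ℝ) ≤ f x * (-1:ℝ) ^ (dotp α x).val + f x := by
    intro x _
    rcases hf x with h | h <;> rw [h]
    · simp
    · rcases Nat.even_or_odd (dotp α x).val with he | ho
      · rw [he.neg_one_pow]; norm_num
      · rw [ho.neg_one_pow]; norm_num
  rw [Finset.sum_eq_zero_iff_of_nonneg hnn]
  constructor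
  · intro h x hx1
    have hx := h x (Finset.mem_univ x)
    rw [hx1, one_mul] at hx
    rcases Nat.even_or_odd (dotp α x).val with he | ho
    · rw [he.neg_one_pow] at hx; norm_num at hx
    · have hlt : (dotp α x).val < 2 := ZMod.val_lt _
      have : (dotp α x).val = 1 := by
        rcases ho with ⟨m, hm⟩; omega
      exact eq_one_of_val this
  · intro h x _
    rcases hf x with h0 | h1
    · rw [h0]; ring
    · rw [h1, h x h1, val_one_zmod2]; norm_num

lemma zmod2_ne_zero {d : ZMod 2} (h : d ≠ 0) : d = 1 := by revert d; decide

lemma zmod2_add_one {d : ZMod 2} (h : d + 1 = 0) : d = 1 := by revert d; decide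

lemma odd_cast_zmod2 {k : ℕ} (h : Odd k) : (k : ZMod 2) = 1 := by
  rcases h with ⟨m, hm⟩
  subst hm
  push_cast
  have h2 : (2 : ZMod 2) = 0 := rfl
  rw [h2]
  ring

lemma even_cast_zmod2 {k : ℕ} (h : Even k) : (k : ZMod 2) = 0 := by
  rcases h with ⟨m, hm⟩
  subst hm
  push_cast
  exact CharTwo.add_self_eq_zero _

lemma add_self_V {n : ℕ} (x : V n) : x + x = 0 := by
  ext i
  exact CharTwo.add_self_eq_zero (x i)

lemma ocf_iff_dotp {n : ℕ} (f : V n → ℝ) :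
    OCF f ↔ ∃ α : V n, ∀ x, f x = 1 → dotp α x = 1 := by
  constructor
  · intro hocf
    by_cases hS : ∀ x, f x ≠ 1
    · exact ⟨0, fun x hx => absurd hx (hS x)⟩
    push_neg at hS
    obtain ⟨s0, hs0⟩ := hS
    set T : Set (V n) := {y | ∃ s, f s = 1 ∧ y = s + s0} with hT
    set W : Submodule (ZMod 2) (V n) := Submodule.span (ZMod 2) T with hW
    have hs0W : s0 ∉ W := by
      intro hmem
      rw [hW, Submodule.mem_span_set] at hmem
      obtain ⟨c, hsupp, hsum⟩ := hmem
      set F := c.support with hF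
      have hsum' : ∑ t ∈ F, t = s0 := by
        rw [← hsum, Finsupp.sum]
        apply Finset.sum_congr rfl
        intro t ht
        have : c t = 1 := zmod2_ne_zero (Finsupp.mem_support_iff.mp ht)
        rw [this, one_smul]
      have hmemF : ∀ t ∈ F, f (t + s0) = 1 := by
        intro t ht
        obtain ⟨s, hfs, hts⟩ := hsupp ht
        have : t + s0 = s := by
          rw [hts, add_assoc, add_self_V, add_zero]
        rw [this]; exact hfs
      set k := F.card with hk
      have hsumFin : ∑ i : Fin k, ((F.equivFin.symm i : V n) + s0)
          = s0 + k • s0 := by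
        rw [Finset.sum_add_distrib]
        congr 1
        · rw [← hsum']
          exact (Fintype.sum_equiv F.equivFin.symm _ (fun a => (a : V n))
            (fun i => rfl)).trans (Finset.sum_coe_sort F (fun x => x))
        · simp [hk, Finset.card_univ]
      rcases Nat.even_or_odd k with hke | hko
      · -- k even: use k+1 points, cons s0
        apply hocf (k + 1) (Even.add_one hke)
        refine ⟨Fin.cons s0 (fun i => (F.equivFin.symm i : V n) + s0), ?_, ?_⟩
        · intro i
          refine Fin.cases ?_ ?_ i
          · exact hs0
          · intro j
            simp only [Fin.cons_succ]
            exact hmemF _ (Finset.coe_mem _)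
        · rw [Fin.sum_univ_succ]
          simp only [Fin.cons_zero, Fin.cons_succ]
          rw [hsumFin, ← Nat.cast_smul_eq_nsmul (ZMod 2),
            even_cast_zmod2 hke, zero_smul, add_zero, add_self_V]
      · apply hocf k hko
        refine ⟨fun i => (F.equivFin.symm i : V n) + s0, ?_, ?_⟩
        · intro i; exact hmemF _ (Finset.coe_mem _)
        · rw [hsumFin, ← Nat.cast_smul_eq_nsmul (ZMod 2),
            odd_cast_zmod2 hko, one_smul, add_self_V]
    obtain ⟨φ, hφ0, hφbot⟩ := W.exists_dual_map_eq_bot_of_notMem hs0W inferInstance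
    have hφs0 : φ s0 = 1 := zmod2_ne_zero hφ0
    have hφW : ∀ y ∈ W, φ y = 0 := by
      intro y hy
      have : φ y ∈ W.map φ := Submodule.mem_map_of_mem hy
      rwa [hφbot, Submodule.mem_bot] at this
    refine ⟨fun i => φ (fun j => if i = j then 1 else 0), ?_⟩
    intro x hx
    have hdx : dotp (fun i => φ (fun j => if i = j then 1 else 0)) x = φ x := by
      rw [LinearMap.pi_apply_eq_sum_univ φ x]
      unfold dotp
      apply Finset.sum_congr rfl
      intro i _
      simp [mul_comm]
    rw [hdx]
    have hxT : x + s0 ∈ W := Submodule.subset_span ⟨x, hx, rfl⟩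
    have := hφW _ hxT
    rw [map_add, hφs0] at this
    exact zmod2_add_one this
  · rintro ⟨α, hα⟩ k hk ⟨x, hx1, hxs⟩
    have h1 : dotp α (∑ i, x i) = 0 := by rw [hxs]; unfold dotp; simp
    rw [dotp_sum] at h1
    have h2 : ∀ i ∈ (Finset.univ : Finset (Fin k)), dotp α (x i) = 1 :=
      fun i _ => hα _ (hx1 i)
    rw [Finset.sum_congr rfl h2, Finset.sum_const, Finset.card_univ,
      Fintype.card_fin, nsmul_eq_mul, mul_one, odd_cast_zmod2 hk] at h1
    exact one_ne_zero h1

theorem stmt3 {n : ℕ} (f : V n → ℝ) (hf : IsBool f) :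
    OCF f ↔ ∃ α : V n, fhat f α = - fhat f 0 :=
  (ocf_iff_dotp f).trans (exists_congr fun α => (fhat_neg_iff f hf α).symm)
end

section
/- Let G be an n-vertex d-regular graph with adjacency matrix A and smallest eigenvalue λ_min. Then for every vertex subset U ⊆ V(G), the number of edges inside U satisfies e(U) ≥ (|U|/(2n))·(|U|·d + λ_min·(n − |U|)). -/
open Finset
open scoped Classical

open Matrix

/-!
`A - λ_min • 1` is positive semidefinite, and the all-ones vector is an eigenvector of it with
eigenvalue `d - λ_min`. Evaluating its quadratic form at `n • 1_U - |U| • 1`, which is orthogonal to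
the all-ones vector, gives `0 ≤ n (n (1_Uᵀ A 1_U - λ_min |U|) - (d - λ_min) |U|²)`, and
`1_Uᵀ A 1_U = 2 e(U)`.
-/

theorem Matrix.IsHermitian.posSemidef_sub_smul_one {n : Type*} [Fintype n] [DecidableEq n]
    {A : Matrix n n ℝ} (hA : A.IsHermitian) {l : ℝ}
    (hl : ∀ μ : ℝ, Module.End.HasEigenvalue (Matrix.toLin' A) μ → l ≤ μ) :
    (A - l • 1).PosSemidef := by
  rw [← Algebra.algebraMap_eq_smul_one, posSemidef_iff_isHermitian_and_spectrum_nonneg,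
    ← spectrum.sub_singleton_eq]
  refine ⟨hA.sub (isHermitian_diagonal _), ?_⟩
  rintro _ ⟨μ, hμ, _, rfl, rfl⟩
  rw [← spectrum_toLin', ← Module.End.hasEigenvalue_iff_mem_spectrum] at hμ
  exact sub_nonneg.mpr (hl μ hμ)

theorem Matrix.PosSemidef.mul_sq_sum_le_card_mul_dotProduct_mulVec {n : Type*} [Fintype n]
    {M : Matrix n n ℝ} (hM : M.PosSemidef) {r : ℝ} (hr : M *ᵥ 1 = r • 1) (x : n → ℝ) :
    r * (∑ i, x i) ^ 2 ≤ Fintype.card n * (x ⬝ᵥ M *ᵥ x) := by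
  set s := ∑ i, x i
  set N : ℝ := (Fintype.card n : ℝ)
  have hx1 : x ⬝ᵥ M *ᵥ 1 = r * s := by
    rw [hr, dotProduct_smul, dotProduct_one, smul_eq_mul]
  have h1x : 1 ⬝ᵥ M *ᵥ x = r * s := by
    rw [dotProduct_mulVec, ← mulVec_transpose, ← conjTranspose_eq_transpose_of_trivial,
      hM.isHermitian.eq, hr, smul_dotProduct, one_dotProduct, smul_eq_mul]
  have h11 : (1 : n → ℝ) ⬝ᵥ M *ᵥ 1 = r * N := by
    simp [hr, N]
  have hy := hM.dotProduct_mulVec_nonneg (N • x - s • 1)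
  simp only [star_trivial, mulVec_sub, mulVec_smul, dotProduct_sub, sub_dotProduct,
    dotProduct_smul, smul_dotProduct, smul_eq_mul, hx1, h1x, h11] at hy
  rcases isEmpty_or_nonempty n with hn | hn
  · simp [s, N]
  · have hN : 0 < N := Nat.cast_pos.mpr Fintype.card_pos
    have hexp : 0 ≤ N * (N * (x ⬝ᵥ M *ᵥ x) - r * s ^ 2) := by linear_combination hy
    linarith [(mul_nonneg_iff_of_pos_left hN).mp hexp]

theorem Matrix.dotProduct_mulVec_indicator {n : Type*} [Fintype n] [DecidableEq n]
    (M : Matrix n n ℝ) (U : Finset n) :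
    (fun i => if i ∈ U then 1 else 0) ⬝ᵥ M *ᵥ (fun i => if i ∈ U then 1 else 0) =
      ∑ i ∈ U, ∑ j ∈ U, M i j := by
  simp [dotProduct, mulVec, Finset.sum_ite_mem]

theorem SimpleGraph.IsRegularOfDegree.adjMatrix_mulVec_one {V : Type*} [Fintype V]
    {G : SimpleGraph V} [DecidableRel G.Adj] {d : ℕ} (hreg : G.IsRegularOfDegree d) :
    G.adjMatrix ℝ *ᵥ 1 = (d : ℝ) • 1 := by
  ext v
  simpa using G.adjMatrix_mulVec_const_apply_of_regular (a := (1 : ℝ)) hreg (v := v)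

theorem stmt8_general {Vt : Type*} [Fintype Vt] (G : SimpleGraph Vt)
    [DecidableRel G.Adj] (d : ℕ) (hreg : G.IsRegularOfDegree d) (lmin : ℝ)
    (hle : ∀ μ : ℝ, Module.End.HasEigenvalue (Matrix.toLin' (G.adjMatrix ℝ)) μ → lmin ≤ μ)
    (U : Finset Vt) :
    (U.card : ℝ) / (2 * Fintype.card Vt) *
        (U.card * d + lmin * (Fintype.card Vt - U.card)) ≤
      (∑ u ∈ U, ∑ v ∈ U, G.adjMatrix ℝ u v) / 2 := by
  set χ : Vt → ℝ := fun v => if v ∈ U then 1 else 0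
  have hpsd := (G.isHermitian_adjMatrix ℝ).posSemidef_sub_smul_one hle
  have hM1 : (G.adjMatrix ℝ - lmin • 1) *ᵥ 1 = ((d : ℝ) - lmin) • 1 := by
    rw [sub_mulVec, hreg.adjMatrix_mulVec_one, smul_mulVec, one_mulVec, sub_smul]
  have hsum : ∑ v, χ v = U.card := by simp [χ]
  have hχχ : χ ⬝ᵥ χ = U.card := by simp [χ, dotProduct]
  have hχA : χ ⬝ᵥ G.adjMatrix ℝ *ᵥ χ = ∑ u ∈ U, ∑ v ∈ U, G.adjMatrix ℝ u v :=
    dotProduct_mulVec_indicator _ U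
  have key := hpsd.mul_sq_sum_le_card_mul_dotProduct_mulVec hM1 χ
  rw [sub_mulVec, dotProduct_sub, smul_mulVec, one_mulVec, dotProduct_smul, smul_eq_mul, hχχ,
    hsum, hχA] at key
  rcases (Fintype.card Vt).eq_zero_or_pos with hn | hn
  · obtain rfl : U = ∅ := Finset.card_eq_zero.mp (Nat.le_zero.mp (hn ▸ U.card_le_univ))
    simp
  · rw [div_mul_eq_mul_div, div_le_div_iff₀ (by positivity) two_pos]
    linear_combination 2 * key

theorem stmt8 {Vt : Type*} [Fintype Vt] [DecidableEq Vt] (G : SimpleGraph Vt)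
    [DecidableRel G.Adj] (d : ℕ) (hreg : G.IsRegularOfDegree d) (lmin : ℝ)
    (hmin : Module.End.HasEigenvalue (Matrix.toLin' (G.adjMatrix ℝ)) lmin)
    (hle : ∀ μ : ℝ, Module.End.HasEigenvalue (Matrix.toLin' (G.adjMatrix ℝ)) μ → lmin ≤ μ)
    (U : Finset Vt) :
    (U.card : ℝ) / (2 * Fintype.card Vt) *
        (U.card * d + lmin * (Fintype.card Vt - U.card)) ≤
      (∑ u ∈ U, ∑ v ∈ U, G.adjMatrix ℝ u v) / 2 :=
  stmt8_general G d hreg lmin hle U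
end

section
/- Let G be an n-vertex d-regular graph whose adjacency matrix has smallest eigenvalue λ_min ≥ −d + 2εn. Then G is ε/2-far from bipartite: for every bipartition (A,B) of V(G), e(A) + e(B) ≥ (1/2)·ε·n². -/
open Finset
open scoped Classical

/-! Let `s` be the `±1` vector of the bipartition `(A, Aᶜ)`. Since `1 + s u s v` is `2` on pairs
on the same side and `0` across, `𝟙ᵀ M 𝟙 + sᵀ M s = 4 (e(A) + e(Aᶜ))`, where `𝟙ᵀ M 𝟙 = d n` for a
`d`-regular graph. The Rayleigh bound `sᵀ M s ≥ λ_min ‖s‖² = λ_min n ≥ (2 ε n - d) n` then gives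
`e(A) + e(Aᶜ) ≥ ε n² / 2`. -/

open Matrix

theorem Matrix.IsHermitian.mul_dotProduct_self_le_dotProduct_mulVec {m : Type*} [Fintype m]
    [DecidableEq m] {M : Matrix m m ℝ} (hM : M.IsHermitian) {c : ℝ}
    (hc : ∀ μ : ℝ, Module.End.HasEigenvalue (toLin' M) μ → c ≤ μ) (x : m → ℝ) :
    c * (x ⬝ᵥ x) ≤ x ⬝ᵥ (M *ᵥ x) := by
  have hpsd : (M - algebraMap ℝ (Matrix m m ℝ) c).PosSemidef := by
    refine posSemidef_iff_isHermitian_and_spectrum_nonneg.2 ⟨?_, ?_⟩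
    · rw [algebraMap_eq_diagonal]
      exact hM.sub (isHermitian_diagonal _)
    · rw [← spectrum.sub_singleton_eq]
      rintro _ ⟨μ, hμ, _, rfl, rfl⟩
      rw [← spectrum_toLin', ← Module.End.hasEigenvalue_iff_mem_spectrum] at hμ
      exact sub_nonneg.2 (hc μ hμ)
  simpa [sub_mulVec, Algebra.algebraMap_eq_smul_one, smul_mulVec, dotProduct_smul, mul_comm]
    using hpsd.dotProduct_mulVec_nonneg x

namespace Finset

variable {α R : Type*} [Fintype α] [DecidableEq α]

def signVector [One R] [Neg R] (A : Finset α) (v : α) : R :=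
  if v ∈ A then 1 else -1

theorem signVector_dotProduct_self [Ring R] (A : Finset α) :
    (A.signVector ⬝ᵥ A.signVector : R) = Fintype.card α := by
  simp [dotProduct, signVector, apply_ite₂]

theorem one_dotProduct_mulVec_one_add_signVector_dotProduct_mulVec [CommRing R]
    (M : Matrix α α R) (A : Finset α) :
    1 ⬝ᵥ (M *ᵥ 1) + A.signVector ⬝ᵥ (M *ᵥ A.signVector) =
      2 * (∑ u ∈ A, ∑ v ∈ A, M u v + ∑ u ∈ Aᶜ, ∑ v ∈ Aᶜ, M u v) := by
  have hsplit (f : α → R) : ∑ u, f u = ∑ u ∈ A, f u + ∑ u ∈ Aᶜ, f u :=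
    (sum_add_sum_compl A f).symm
  have hA : ∀ u ∈ A, A.signVector u = (1 : R) := fun u hu => if_pos hu
  have hAc : ∀ u ∈ Aᶜ, A.signVector u = (-1 : R) := fun u hu => if_neg (mem_compl.1 hu)
  simp only [dotProduct, mulVec, Pi.one_apply, one_mul, hsplit]
  simp +contextual only [hA, hAc, one_mul, neg_one_mul, mul_one, mul_neg]
  simp only [sum_add_distrib, sum_neg_distrib]
  ring

end Finset

theorem SimpleGraph.IsRegularOfDegree.one_dotProduct_adjMatrix_mulVec_one {V R : Type*}
    [Fintype V] [NonAssocSemiring R] {G : SimpleGraph V} [DecidableRel G.Adj] {d : ℕ}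
    (hd : G.IsRegularOfDegree d) :
    1 ⬝ᵥ (G.adjMatrix R *ᵥ 1) = Fintype.card V * d := by
  simp [dotProduct, ← Function.const_one, adjMatrix_mulVec_const_apply_of_regular hd]

theorem stmt9_general {Vt : Type*} [Fintype Vt] [DecidableEq Vt] (G : SimpleGraph Vt)
    [DecidableRel G.Adj] (d : ℕ) (hreg : G.IsRegularOfDegree d) (ε : ℝ) (lmin : ℝ)
    (hle : ∀ μ : ℝ, Module.End.HasEigenvalue (Matrix.toLin' (G.adjMatrix ℝ)) μ → lmin ≤ μ)
    (hbound : lmin ≥ -(d : ℝ) + 2 * ε * Fintype.card Vt) :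
    ∀ A : Finset Vt,
      (1 / 2) * ε * (Fintype.card Vt : ℝ) ^ 2 ≤
        (∑ u ∈ A, ∑ v ∈ A, G.adjMatrix ℝ u v) / 2 +
          (∑ u ∈ Aᶜ, ∑ v ∈ Aᶜ, G.adjMatrix ℝ u v) / 2 := by
  intro A
  have hrayleigh :=
    (G.isHermitian_adjMatrix ℝ).mul_dotProduct_self_le_dotProduct_mulVec hle A.signVector
  have hsameSide := A.one_dotProduct_mulVec_one_add_signVector_dotProduct_mulVec (G.adjMatrix ℝ)
  rw [A.signVector_dotProduct_self] at hrayleigh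
  rw [hreg.one_dotProduct_adjMatrix_mulVec_one] at hsameSide
  have hn : (0 : ℝ) ≤ Fintype.card Vt := Nat.cast_nonneg _
  nlinarith [mul_le_mul_of_nonneg_right hbound hn]

theorem stmt9 {Vt : Type*} [Fintype Vt] [DecidableEq Vt] (G : SimpleGraph Vt)
    [DecidableRel G.Adj] (d : ℕ) (hreg : G.IsRegularOfDegree d) (ε : ℝ) (lmin : ℝ)
    (hmin : Module.End.HasEigenvalue (Matrix.toLin' (G.adjMatrix ℝ)) lmin)
    (hle : ∀ μ : ℝ, Module.End.HasEigenvalue (Matrix.toLin' (G.adjMatrix ℝ)) μ → lmin ≤ μ)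
    (hbound : lmin ≥ -(d : ℝ) + 2 * ε * Fintype.card Vt) :
    ∀ A : Finset Vt,
      (1 / 2) * ε * (Fintype.card Vt : ℝ) ^ 2 ≤
        (∑ u ∈ A, ∑ v ∈ A, G.adjMatrix ℝ u v) / 2 +
          (∑ u ∈ Aᶜ, ∑ v ∈ Aᶜ, G.adjMatrix ℝ u v) / 2 :=
  stmt9_general G d hreg ε lmin hle hbound
end

section
/- If f: F_2^n → {0,1} is ε-far from odd-cycle-free, then the Cayley graph G(f) on vertex set F_2^n (with x ~ y iff f(x+y)=1) is ε/2-far from bipartite, i.e., every bipartition of F_2^n leaves at least (1/2)ε·4^n edges inside the parts. -/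
open Finset
open scoped Classical

/-! Write `T_S(α) = ∑_{x ∈ S} χ_α(x)` for `χ_α(x) = (-1)^(α·x)`. By Fourier inversion the number
of edges inside a part `S` is `∑_α f̂(α) T_S(α)²`, and by Parseval
`∑_α (T_A(α)² + T_{Aᶜ}(α)²) = 2ⁿ (a + b) = 4ⁿ` where `a = #A`, `b = #Aᶜ`.

Restricting `f` to the affine hyperplane `α·x = 1` gives an odd-cycle-free function, since a sum of
an odd number of such points again has `α·x = 1`; for `α = 0` the restriction is `0`. Hence `f` has
at least `ε 2ⁿ` support points on every hyperplane `α·x = 0`, i.e. `f̂(0) + f̂(α) ≥ 2ε` for all `α`,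
and in particular `f̂(0) ≥ ε`. Splitting off `α = 0`, where `T_A² + T_{Aᶜ}² = a² + b²`, the edge
count is at least `f̂(0)(a² + b²) + (2ε - f̂(0))·2ab = ε(a + b)² + (f̂(0) - ε)(a - b)² ≥ ε 4ⁿ`. -/

lemma ZMod.neg_one_pow_val_eq_one_iff (a : ZMod 2) : (-1 : ℝ) ^ a.val = 1 ↔ a = 0 := by
  obtain rfl | rfl : a = 0 ∨ a = 1 := by revert a; decide
  · simp
  · norm_num [ZMod.val_one]

lemma ZMod.one_add_neg_one_pow_val (a : ZMod 2) :
    1 + (-1 : ℝ) ^ a.val = if a = 1 then 0 else 2 := by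
  obtain rfl | rfl : a = 0 ∨ a = 1 := by revert a; decide
  · norm_num
  · simp [ZMod.val_one]

section Characters

variable {n : ℕ}

noncomputable def chi (α : V n) : AddChar (V n) ℝ :=
  (AddChar.zmodChar 2 (by norm_num : (-1 : ℝ) ^ 2 = 1)).compAddMonoidHom
    (AddMonoidHom.mk' (dotp α) (dotProduct_add α))

lemma chi_apply (α x : V n) : chi α x = (-1) ^ (dotp α x).val := rfl

lemma fhat_eq_sum_mul_chi (f : V n → ℝ) (α : V n) :
    fhat f α = (∑ x, f x * chi α x) / 2 ^ n := rfl

lemma chi_comm (α x : V n) : chi α x = chi x α := by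
  rw [chi_apply, chi_apply, dotp, dotp]
  simp only [mul_comm]

lemma chi_zero_apply (x : V n) : chi 0 x = 1 := by
  simp [chi_apply, dotp]

lemma chi_eq_zero_iff {α : V n} : chi α = 0 ↔ α = 0 := by
  refine ⟨fun h => funext fun i => ?_, fun h => by ext x; simp [h, chi_zero_apply]⟩
  have := DFunLike.congr_fun h (Pi.single i 1)
  rwa [AddChar.zero_apply, chi_apply, ZMod.neg_one_pow_val_eq_one_iff, dotp, ← dotProduct,
    dotProduct_single_one] at this

lemma sum_chi_mul_chi (x y : V n) :
    ∑ α, chi α x * chi α y = if x = y then 2 ^ n else 0 := by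
  simp_rw [← AddChar.map_add_eq_mul, chi_comm _ (x + y), AddChar.sum_eq_ite, chi_eq_zero_iff,
    ← ZModModule.sub_eq_add, sub_eq_zero]
  simp

end Characters

section Fourier

variable {n : ℕ}

lemma sum_fhat_mul_chi (f : V n → ℝ) (w : V n) : ∑ α, fhat f α * chi α w = f w := by
  simp_rw [fhat_eq_sum_mul_chi, div_mul_eq_mul_div, ← Finset.sum_div, Finset.sum_mul, mul_assoc]
  rw [Finset.sum_comm]
  simp_rw [← Finset.mul_sum, sum_chi_mul_chi]
  simp

lemma sum_sum_apply_add_eq_sum_fhat_mul_sq (f : V n → ℝ) (A : Finset (V n)) :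
    ∑ x ∈ A, ∑ y ∈ A, f (x + y) = ∑ α, fhat f α * (∑ x ∈ A, chi α x) ^ 2 := by
  simp_rw [← sum_fhat_mul_chi f (_ + _), AddChar.map_add_eq_mul, sq, Finset.sum_mul_sum,
    Finset.mul_sum]
  rw [eq_comm, Finset.sum_comm]
  exact Finset.sum_congr rfl fun x _ => Finset.sum_comm

lemma sum_sq_sum_chi (A : Finset (V n)) : ∑ α, (∑ x ∈ A, chi α x) ^ 2 = 2 ^ n * #A := by
  simp_rw [sq, Finset.sum_mul_sum]
  rw [Finset.sum_comm]
  simp_rw [Finset.sum_comm (s := univ), sum_chi_mul_chi]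
  simp [mul_comm]

end Fourier

lemma Finset.le_sum_mul_of_forall_le_add {ι : Type*} [Fintype ι] (F u : ι → ℝ) (i₀ : ι) (c : ℝ)
    (hu : ∀ i, 0 ≤ u i) (hF : ∀ i, c ≤ F i₀ + F i) :
    F i₀ * u i₀ + (c - F i₀) * (∑ i, u i - u i₀) ≤ ∑ i, F i * u i := by
  rw [← Finset.add_sum_erase univ u (mem_univ i₀), ← Finset.add_sum_erase univ _ (mem_univ i₀),
    add_sub_cancel_left, Finset.mul_sum]
  exact add_le_add le_rfl
    (Finset.sum_le_sum fun i _ => mul_le_mul_of_nonneg_right (by linarith [hF i]) (hu i))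

section Hyperplanes

variable {n : ℕ} {f : V n → ℝ}

lemma IsBool.indicator (hf : IsBool f) (s : Set (V n)) : IsBool (s.indicator f) := by
  intro x
  by_cases hx : x ∈ s
  · simpa [hx] using hf x
  · simp [hx]

lemma IsBool.card_ne_indicator (hf : IsBool f) (s : Set (V n)) :
    (#{x | f x ≠ s.indicator f x} : ℝ) = ∑ x with x ∉ s, f x := by
  rw [← Finset.sum_filter_ne_zero, Finset.filter_filter, Finset.card_eq_sum_ones, Nat.cast_sum]
  refine Finset.sum_congr (Finset.filter_congr fun x _ => ?_) fun x hx => ?_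
  · by_cases hx : x ∈ s <;> simp [hx]
  · simp only [Finset.mem_filter] at hx
    simp [(hf x).resolve_left hx.2.2]

lemma OCF.of_dotp_eq_one {g : V n → ℝ} (α : V n) (hg : ∀ x, g x = 1 → dotp α x = 1) : OCF g := by
  rintro k hk ⟨x, hx, hsum⟩
  have hdotp : ∀ i, α ⬝ᵥ x i = 1 := fun i => hg _ (hx i)
  have hk0 : (k : ZMod 2) = 0 := calc
    (k : ZMod 2) = ∑ i, α ⬝ᵥ x i := by simp [hdotp]
    _ = α ⬝ᵥ ∑ i, x i := (dotProduct_sum ..).symm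
    _ = 0 := by rw [hsum, dotProduct_zero]
  exact Nat.not_even_iff_odd.mpr hk (ZMod.natCast_eq_zero_iff_even.mp hk0)

lemma FarFromOCF.le_sum_dotp_ne_one {ε : ℝ} (hf : IsBool f) (hfar : FarFromOCF ε f) (α : V n) :
    ε * 2 ^ n ≤ ∑ x with dotp α x ≠ 1, f x := by
  have hOCF : OCF ({x | dotp α x = 1}.indicator f) := by
    refine OCF.of_dotp_eq_one α fun x hx => ?_
    by_contra h
    simp [h] at hx
  simpa [hf.card_ne_indicator] using hfar _ (hf.indicator _) hOCF

lemma fhat_zero_add_fhat (f : V n → ℝ) (α : V n) :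
    fhat f 0 + fhat f α = 2 * (∑ x with dotp α x ≠ 1, f x) / 2 ^ n := by
  simp_rw [fhat_eq_sum_mul_chi, chi_zero_apply, ← add_div, ← Finset.sum_add_distrib, ← mul_add,
    chi_apply, ZMod.one_add_neg_one_pow_val, Finset.sum_filter, Finset.mul_sum]
  congr 1
  refine Finset.sum_congr rfl fun x _ => ?_
  by_cases h : dotp α x = 1 <;> simp [h, mul_comm]

lemma FarFromOCF.two_mul_le_fhat_zero_add_fhat {ε : ℝ} (hf : IsBool f) (hfar : FarFromOCF ε f)
    (α : V n) : 2 * ε ≤ fhat f 0 + fhat f α := by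
  rw [fhat_zero_add_fhat, le_div_iff₀ (by positivity)]
  linarith [hfar.le_sum_dotp_ne_one hf α]

end Hyperplanes

theorem stmt11 {n : ℕ} (f : V n → ℝ) (hf : IsBool f) (ε : ℝ)
    (hfar : FarFromOCF ε f) (A : Finset (V n)) :
    (1 / 2) * ε * 4 ^ n ≤
      (∑ x ∈ A, ∑ y ∈ A, f (x + y)) / 2 + (∑ x ∈ Aᶜ, ∑ y ∈ Aᶜ, f (x + y)) / 2 := by
  set u : V n → ℝ := fun α => (∑ x ∈ A, chi α x) ^ 2 + (∑ x ∈ Aᶜ, chi α x) ^ 2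
  have hedges : ∑ x ∈ A, ∑ y ∈ A, f (x + y) + ∑ x ∈ Aᶜ, ∑ y ∈ Aᶜ, f (x + y) =
      ∑ α, fhat f α * u α := by
    simp only [sum_sum_apply_add_eq_sum_fhat_mul_sq, u, mul_add, Finset.sum_add_distrib]
  have hsum_u : ∑ α, u α = 2 ^ n * (#A + #Aᶜ) := by
    simp only [u, Finset.sum_add_distrib, sum_sq_sum_chi, mul_add]
  have hu_zero : u 0 = #A ^ 2 + #Aᶜ ^ 2 := by simp [u, chi_zero_apply]
  have hcard : (#A + #Aᶜ : ℝ) = 2 ^ n := by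
    rw [← Nat.cast_add, Finset.card_add_card_compl]
    simp
  have hbound := Finset.le_sum_mul_of_forall_le_add (fhat f) u 0 (2 * ε) (fun α => by positivity)
    (hfar.two_mul_le_fhat_zero_add_fhat hf)
  have hε : ε ≤ fhat f 0 := by linarith [hfar.two_mul_le_fhat_zero_add_fhat hf 0]
  have h4 : (4 : ℝ) ^ n = (#A + #Aᶜ) ^ 2 := by rw [hcard, ← pow_mul, mul_comm, pow_mul]; norm_num
  rw [hsum_u, hu_zero, ← hcard, ← hedges] at hbound
  rw [h4]
  nlinarith [mul_nonneg (sub_nonneg.2 hε) (sq_nonneg ((#A : ℝ) - #Aᶜ))]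
end

section
/- Let f: F_2^n → {0,1} and let H be a uniformly random linear subspace of F_2^n of size h (spanned by uniformly random vectors). Define f̂_H(α) = E_{x∈H}[f(x)(−1)^{α·x}]. Then E_H[(f̂_H(α) − E_H[f̂_H(α)])²] ≤ 14/h, and consequently by Chebyshev, for every η > 0, Pr_H[|f̂_H(α) − f̂(α)| ≥ 2/h + η] ≤ 14/(hη²). -/
open Finset
open scoped Classical

/-- The finite set of linear subspaces of `F_2^n` (as finsets) of size `h`. -/
def subspaces (n h : ℕ) : Finset (Finset (V n)) :=
  Finset.univ.filter fun H => H.card = h ∧ (0 : V n) ∈ H ∧ ∀ x ∈ H, ∀ y ∈ H, x + y ∈ H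

/-- The restricted Fourier coefficient `f̂_H(α) = E_{x∈H}[f(x)(−1)^{α·x}]`. -/
noncomputable def fhatOn {n : ℕ} (f : V n → ℝ) (H : Finset (V n)) (α : V n) : ℝ :=
  (∑ x ∈ H, f x * (-1 : ℝ) ^ (dotp α x).val) / H.card

/-- Expectation over a uniformly random subspace of size `h`. -/
noncomputable def EH (n h : ℕ) (X : Finset (V n) → ℝ) : ℝ :=
  (∑ H ∈ subspaces n h, X H) / (subspaces n h).card

/-!
Put `g x = f x * (-1) ^ (α · x)` and `w = g - f̂(α)`, so that `∑ₓ w x = 0`, `|w| ≤ 2` and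
`f̂_H(α) - f̂(α) = (∑_{x ∈ H} w x) / h`. Linear automorphisms of `F₂ⁿ` permute the `N` subspaces of
size `h` and act transitively on nonzero vectors and on pairs of distinct nonzero vectors, so
the number `r` of these subspaces through a nonzero vector and the number `l` through two
distinct nonzero vectors are constants, with `l ≤ r` and `r (2ⁿ - 1) = N (h - 1)`. Expanding the
square and using `∑_{x ≠ 0} w x = -w 0`,
`∑_H (∑_{x ∈ H} w x)² = (N - 2r + l) (w 0)² + (r - l) ∑_{x ≠ 0} (w x)² ≤ 4 h N`.
Thus `E_H[(f̂_H(α) - f̂(α))²] ≤ 4 / h`; this bounds the variance, since the mean minimises the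
mean square deviation, and Chebyshev's inequality gives the tail bound.
-/

open Module

theorem Module.Basis.sumExtend_apply_inl {K V ι : Type*} [DivisionRing K] [AddCommGroup V]
    [Module K V] {v : ι → V} (hv : LinearIndependent K v) (i : ι) :
    Basis.sumExtend hv (Sum.inl i) = v i := by
  unfold Basis.sumExtend Basis.sumExtendIndex
  simp [Trans.trans, Equiv.Set.sumDiffSubset_apply_inl]

theorem exists_linearEquiv_apply_eq {K V ι : Type*} [DivisionRing K] [AddCommGroup V] [Module K V]
    [FiniteDimensional K V] {v w : ι → V} (hv : LinearIndependent K v)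
    (hw : LinearIndependent K w) : ∃ A : V ≃ₗ[K] V, ∀ i, A (v i) = w i := by
  have := hv.finite
  have := Module.Finite.finite_basis (Basis.sumExtend hv)
  have := Module.Finite.finite_basis (Basis.sumExtend hw)
  have := Finite.of_injective _ (Sum.inr_injective (α := ι) (β := Basis.sumExtendIndex hv))
  have := Finite.of_injective _ (Sum.inr_injective (α := ι) (β := Basis.sumExtendIndex hw))
  have hcard : Nat.card (Basis.sumExtendIndex hv) = Nat.card (Basis.sumExtendIndex hw) := by
    have := (finrank_eq_nat_card_basis (Basis.sumExtend hv)).symm.trans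
      (finrank_eq_nat_card_basis (Basis.sumExtend hw))
    rw [Nat.card_sum, Nat.card_sum] at this
    omega
  obtain ⟨e⟩ := Finite.card_eq.mp hcard
  refine ⟨(Basis.sumExtend hv).equiv (Basis.sumExtend hw) ((Equiv.refl ι).sumCongr e), fun i => ?_⟩
  rw [← Basis.sumExtend_apply_inl hv, Basis.equiv_apply, Equiv.sumCongr_apply, Sum.map_inl,
    Equiv.refl_apply, Basis.sumExtend_apply_inl]

theorem linearIndependent_pair_zmod_two {M : Type*} [AddCommGroup M] [Module (ZMod 2) M]
    {x y : M} (hx : x ≠ 0) (hy : y ≠ 0) (hxy : x ≠ y) : LinearIndependent (ZMod 2) ![x, y] := by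
  rw [LinearIndependent.pair_iff' hx]
  intro a
  rcases (by decide : ∀ a : ZMod 2, a = 0 ∨ a = 1) a with rfl | rfl <;> simp [hy.symm, hxy]

section DoubleCounting

variable {α : Type*} [DecidableEq α] (S : Finset (Finset α)) (U : Finset α) (w : α → ℝ)

theorem sum_sum_inter_eq :
    ∑ B ∈ S, ∑ x ∈ U ∩ B, w x = ∑ x ∈ U, (#{B ∈ S | x ∈ B} : ℝ) * w x := by
  simp_rw [← filter_mem_eq_inter, sum_filter]
  rw [sum_comm]
  refine sum_congr rfl fun x _ => ?_
  rw [← sum_filter, sum_const, nsmul_eq_mul]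

theorem sum_sq_sum_inter_eq :
    ∑ B ∈ S, (∑ x ∈ U ∩ B, w x) ^ 2 =
      ∑ x ∈ U, ∑ y ∈ U, (#{B ∈ S | x ∈ B ∧ y ∈ B} : ℝ) * (w x * w y) := by
  have hB : ∀ B : Finset α, (∑ x ∈ U ∩ B, w x) ^ 2 =
      ∑ x ∈ U, ∑ y ∈ U, if x ∈ B ∧ y ∈ B then w x * w y else 0 := by
    intro B
    simp_rw [sq, sum_mul_sum, ← filter_mem_eq_inter, sum_filter, ite_and]
    exact sum_congr rfl fun x _ => by split_ifs <;> simp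
  simp_rw [hB]
  rw [sum_comm]
  refine sum_congr rfl fun x _ => ?_
  rw [sum_comm]
  refine sum_congr rfl fun y _ => ?_
  rw [← sum_filter, sum_const, nsmul_eq_mul]

variable {S U}

theorem sum_sum_inter_eq_of_card_eq {r : ℕ} (hr : ∀ x ∈ U, #{B ∈ S | x ∈ B} = r) :
    ∑ B ∈ S, ∑ x ∈ U ∩ B, w x = r * ∑ x ∈ U, w x := by
  rw [sum_sum_inter_eq, mul_sum]
  exact sum_congr rfl fun x hx => by rw [hr x hx]

theorem sum_sq_sum_inter_eq_of_card_eq {r l : ℕ} (hr : ∀ x ∈ U, #{B ∈ S | x ∈ B} = r)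
    (hl : ∀ x ∈ U, ∀ y ∈ U, x ≠ y → #{B ∈ S | x ∈ B ∧ y ∈ B} = l) :
    ∑ B ∈ S, (∑ x ∈ U ∩ B, w x) ^ 2 =
      r * ∑ x ∈ U, w x ^ 2 + l * ((∑ x ∈ U, w x) ^ 2 - ∑ x ∈ U, w x ^ 2) := by
  have hrow : ∀ x ∈ U, ∑ y ∈ U, (#{B ∈ S | x ∈ B ∧ y ∈ B} : ℝ) * (w x * w y) =
      r * w x ^ 2 + l * (w x * ∑ y ∈ U, w y - w x ^ 2) := by
    intro x hx
    rw [← add_sum_erase U _ hx]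
    simp only [and_self]
    rw [hr x hx,
      sum_congr rfl fun y hy => by rw [hl x hx y (mem_of_mem_erase hy) (ne_of_mem_erase hy).symm],
      ← mul_sum, ← mul_sum, sum_erase_eq_sub hx]
    ring
  rw [sum_sq_sum_inter_eq, sum_congr rfl hrow, sum_add_distrib, ← mul_sum, ← mul_sum,
    sum_sub_distrib, ← sum_mul]
  ring

end DoubleCounting

section Statistics

variable {ι : Type*} (s : Finset ι) (X : ι → ℝ)

theorem sum_sq_sub_mean_le (c : ℝ) :
    ∑ i ∈ s, (X i - (∑ j ∈ s, X j) / #s) ^ 2 ≤ ∑ i ∈ s, (X i - c) ^ 2 := by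
  rcases s.eq_empty_or_nonempty with rfl | hs
  · simp
  set μ := (∑ j ∈ s, X j) / #s
  have hsum : ∑ j ∈ s, X j = #s * μ := by
    rw [mul_div_cancel₀ _ (Nat.cast_ne_zero.mpr hs.card_pos.ne')]
  clear_value μ
  have hexpand : ∀ i, (X i - c) ^ 2 = (X i - μ) ^ 2 + 2 * (μ - c) * X i + (c ^ 2 - μ ^ 2) :=
    fun i => by ring
  calc ∑ i ∈ s, (X i - μ) ^ 2 ≤ ∑ i ∈ s, (X i - μ) ^ 2 + #s * (μ - c) ^ 2 :=
        le_add_of_nonneg_right (by positivity)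
    _ = ∑ i ∈ s, (X i - c) ^ 2 := by
        rw [sum_congr rfl fun i _ => hexpand i, sum_add_distrib, sum_add_distrib, ← mul_sum,
          sum_const, nsmul_eq_mul, hsum]
        ring

theorem card_filter_le_abs_mul_sq_le_sum_sq {t : ℝ} (ht : 0 ≤ t) :
    #{i ∈ s | t ≤ |X i|} * t ^ 2 ≤ ∑ i ∈ s, X i ^ 2 :=
  calc (#{i ∈ s | t ≤ |X i|} : ℝ) * t ^ 2 = ∑ i ∈ s with t ≤ |X i|, t ^ 2 := by
        rw [sum_const, nsmul_eq_mul]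
    _ ≤ ∑ i ∈ s with t ≤ |X i|, X i ^ 2 := sum_le_sum fun i hi => by
        simpa only [sq_abs] using pow_le_pow_left₀ ht (mem_filter.mp hi).2 2
    _ ≤ ∑ i ∈ s, X i ^ 2 :=
        sum_le_sum_of_subset_of_nonneg (filter_subset _ _) fun i _ _ => sq_nonneg (X i)

end Statistics

section Subspaces

variable {n h : ℕ}

theorem mem_subspaces {H : Finset (V n)} :
    H ∈ subspaces n h ↔ #H = h ∧ (0 : V n) ∈ H ∧ ∀ x ∈ H, ∀ y ∈ H, x + y ∈ H := by
  simp [subspaces]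

theorem image_mem_subspaces (A : V n ≃ₗ[ZMod 2] V n) {H : Finset (V n)}
    (hH : H ∈ subspaces n h) : H.image A ∈ subspaces n h := by
  obtain ⟨hcard, hzero, hadd⟩ := mem_subspaces.mp hH
  refine mem_subspaces.mpr ⟨by rwa [card_image_of_injective _ A.injective], ?_, ?_⟩
  · exact mem_image.mpr ⟨0, hzero, map_zero A⟩
  · simp only [mem_image]
    rintro _ ⟨x, hx, rfl⟩ _ ⟨y, hy, rfl⟩
    exact ⟨x + y, hadd x hx y hy, map_add A x y⟩

theorem card_subspaces_forall_mem_eq {ι : Type*} {v w : ι → V n}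
    (hv : LinearIndependent (ZMod 2) v) (hw : LinearIndependent (ZMod 2) w) :
    #{H ∈ subspaces n h | ∀ i, v i ∈ H} = #{H ∈ subspaces n h | ∀ i, w i ∈ H} := by
  obtain ⟨A, hA⟩ := exists_linearEquiv_apply_eq hv hw
  have hA' : ∀ i, A.symm (w i) = v i := fun i => by rw [← hA, A.symm_apply_apply]
  refine card_nbij' (image A) (image A.symm) ?_ ?_ ?_ ?_
  · intro H hH
    simp only [coe_filter, Set.mem_ofPred_eq] at hH ⊢
    exact ⟨image_mem_subspaces A hH.1, fun i => hA i ▸ mem_image_of_mem _ (hH.2 i)⟩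
  · intro H hH
    simp only [coe_filter, Set.mem_ofPred_eq] at hH ⊢
    exact ⟨image_mem_subspaces A.symm hH.1, fun i => hA' i ▸ mem_image_of_mem _ (hH.2 i)⟩
  · intro H _
    simp [image_image, Function.comp_def]
  · intro H _
    simp [image_image, Function.comp_def]

theorem card_subspaces_mem_eq {x y : V n} (hx : x ≠ 0) (hy : y ≠ 0) :
    #{H ∈ subspaces n h | x ∈ H} = #{H ∈ subspaces n h | y ∈ H} := by
  simpa using card_subspaces_forall_mem_eq (h := h)
    ((linearIndependent_unique_iff (v := fun _ : Unit => x)).mpr hx)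
    ((linearIndependent_unique_iff (v := fun _ : Unit => y)).mpr hy)

theorem card_subspaces_mem_mem_eq {x y x' y' : V n} (hx : x ≠ 0) (hy : y ≠ 0)
    (hxy : x ≠ y) (hx' : x' ≠ 0) (hy' : y' ≠ 0) (hxy' : x' ≠ y') :
    #{H ∈ subspaces n h | x ∈ H ∧ y ∈ H} = #{H ∈ subspaces n h | x' ∈ H ∧ y' ∈ H} := by
  simpa [Fin.forall_fin_two] using card_subspaces_forall_mem_eq (h := h)
    (linearIndependent_pair_zmod_two hx hy hxy) (linearIndependent_pair_zmod_two hx' hy' hxy')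

theorem exists_card_subspaces_mem_eq : ∃ r l : ℕ, l ≤ r ∧ r ≤ #(subspaces n h) ∧
    (∀ x ∈ univ.erase (0 : V n), #{H ∈ subspaces n h | x ∈ H} = r) ∧
    ∀ x ∈ univ.erase (0 : V n), ∀ y ∈ univ.erase (0 : V n), x ≠ y →
      #{H ∈ subspaces n h | x ∈ H ∧ y ∈ H} = l := by
  obtain hU | ⟨x₀, hx₀⟩ := (univ.erase (0 : V n)).eq_empty_or_nonempty
  · exact ⟨0, 0, le_rfl, Nat.zero_le _, by simp [hU], by simp [hU]⟩
  have hr : ∀ x ∈ univ.erase (0 : V n),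
      #{H ∈ subspaces n h | x ∈ H} = #{H ∈ subspaces n h | x₀ ∈ H} := fun x hx =>
    card_subspaces_mem_eq (ne_of_mem_erase hx) (ne_of_mem_erase hx₀)
  by_cases hpair : ∃ y₀ ∈ univ.erase (0 : V n), x₀ ≠ y₀
  · obtain ⟨y₀, hy₀, hxy₀⟩ := hpair
    refine ⟨_, #{H ∈ subspaces n h | x₀ ∈ H ∧ y₀ ∈ H}, ?_, card_filter_le _ _, hr, ?_⟩
    · exact card_le_card (monotone_filter_right _ fun _ _ => And.left)
    · intro x hx y hy hxy
      exact card_subspaces_mem_mem_eq (ne_of_mem_erase hx) (ne_of_mem_erase hy) hxy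
        (ne_of_mem_erase hx₀) (ne_of_mem_erase hy₀) hxy₀
  · push Not at hpair
    refine ⟨_, 0, Nat.zero_le _, card_filter_le _ _, hr, fun x hx y hy hxy => ?_⟩
    exact absurd ((hpair x hx).symm.trans (hpair y hy)) hxy

theorem sum_subspaces_sq_sum_le {w : V n → ℝ} (hw : ∑ x, w x = 0) {b : ℝ}
    (hb : ∀ x, |w x| ≤ b) :
    ∑ H ∈ subspaces n h, (∑ x ∈ H, w x) ^ 2 ≤ b ^ 2 * h * #(subspaces n h) := by
  set S := subspaces n h
  set U := univ.erase (0 : V n)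
  obtain ⟨r, l, hlr, hrS, hr, hl⟩ := exists_card_subspaces_mem_eq (n := n) (h := h)
  have hsplit : ∀ H ∈ S, ∑ x ∈ H, w x = w 0 + ∑ x ∈ U ∩ H, w x := fun H hH => by
    rw [erase_inter, univ_inter, add_sum_erase _ _ (mem_subspaces.mp hH).2.1]
  have hW : ∑ x ∈ U, w x = -w 0 := by
    rw [← add_sum_erase univ w (mem_univ 0)] at hw
    linarith
  have hrU : (r : ℝ) * #U = #S * (h - 1) := by
    have hcard : ∀ H ∈ S, (#(U ∩ H) : ℝ) = h - 1 := fun H hH => by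
      obtain ⟨hc, h0, -⟩ := mem_subspaces.mp hH
      rw [erase_inter, univ_inter, card_erase_of_mem h0, hc,
        Nat.cast_pred (hc ▸ card_pos.mpr ⟨0, h0⟩)]
    have hcount := sum_sum_inter_eq_of_card_eq (fun _ => (1 : ℝ)) hr
    simp only [sum_const, nsmul_eq_mul, mul_one] at hcount
    rw [← hcount, sum_congr rfl hcard, sum_const, nsmul_eq_mul]
  have hsq : ∀ x, w x ^ 2 ≤ b ^ 2 := fun x => by
    simpa only [sq_abs] using pow_le_pow_left₀ (abs_nonneg _) (hb x) 2
  have hQ : ∑ x ∈ U, w x ^ 2 ≤ #U * b ^ 2 := by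
    simpa using sum_le_card_nsmul U _ _ fun x _ => hsq x
  have hexpand : ∑ H ∈ S, (∑ x ∈ H, w x) ^ 2 =
      (#S - 2 * r + l) * w 0 ^ 2 + (r - l) * ∑ x ∈ U, w x ^ 2 := by
    rw [sum_congr rfl fun H hH => by rw [hsplit H hH]]
    simp only [add_sq, sum_add_distrib, sum_const, nsmul_eq_mul, ← mul_sum]
    rw [sum_sum_inter_eq_of_card_eq w hr, sum_sq_sum_inter_eq_of_card_eq w hr hl, hW]
    ring
  have hlr' : (l : ℝ) ≤ r := by exact_mod_cast hlr
  have hrS' : (r : ℝ) ≤ #S := by exact_mod_cast hrS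
  have hQ0 : 0 ≤ ∑ x ∈ U, w x ^ 2 := sum_nonneg fun x _ => sq_nonneg (w x)
  rw [hexpand]
  nlinarith [mul_le_mul_of_nonneg_left (hsq 0) (sub_nonneg.2 hrS'),
    mul_nonneg (sub_nonneg.2 hlr') (sq_nonneg (w 0)), mul_nonneg l.cast_nonneg hQ0,
    mul_le_mul_of_nonneg_left hQ r.cast_nonneg, mul_nonneg r.cast_nonneg (sq_nonneg b)]

end Subspaces

theorem IsBool.abs_mul_neg_one_pow_le_one {n : ℕ} {f : V n → ℝ} (hf : IsBool f) (x : V n)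
    (k : ℕ) : |f x * (-1) ^ k| ≤ 1 := by
  rcases hf x with hx | hx <;>
    simp only [hx, abs_mul, abs_pow, abs_neg, abs_one, one_pow, abs_zero] <;> norm_num

theorem abs_fhat_le_one {n : ℕ} {f : V n → ℝ} (hf : IsBool f) (α : V n) : |fhat f α| ≤ 1 := by
  rw [fhat, abs_div, abs_of_pos (by positivity : (0 : ℝ) < 2 ^ n), div_le_one (by positivity)]
  calc |∑ x : V n, f x * (-1) ^ (dotp α x).val| ≤ ∑ x : V n, |f x * (-1) ^ (dotp α x).val| :=
        abs_sum_le_sum_abs _ _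
    _ ≤ ∑ _x : V n, (1 : ℝ) := sum_le_sum fun x _ => hf.abs_mul_neg_one_pow_le_one x _
    _ = 2 ^ n := by simp

theorem sum_sq_fhatOn_sub_fhat_le {n h : ℕ} (hpos : 0 < h) {f : V n → ℝ} (hf : IsBool f)
    (α : V n) :
    ∑ H ∈ subspaces n h, (fhatOn f H α - fhat f α) ^ 2 ≤ 4 / h * #(subspaces n h) := by
  set c := fhat f α
  set g : V n → ℝ := fun x => f x * (-1) ^ (dotp α x).val
  have hdev : ∀ H ∈ subspaces n h, fhatOn f H α - c = (∑ x ∈ H, (g x - c)) / h := fun H hH => by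
    have hh : (h : ℝ) ≠ 0 := by exact_mod_cast hpos.ne'
    rw [fhatOn, (mem_subspaces.mp hH).1, sum_sub_distrib, sum_const, (mem_subspaces.mp hH).1,
      nsmul_eq_mul]
    field_simp
    rfl
  have hw : ∑ x, (g x - c) = 0 := by
    simp only [sum_sub_distrib, sum_const, card_univ, c, fhat, g, Fintype.card_pi, ZMod.card,
      prod_const, Fintype.card_fin, nsmul_eq_mul, Nat.cast_pow, Nat.cast_ofNat]
    rw [mul_div_cancel₀ _ (by positivity), sub_self]
  have hwb : ∀ x, |g x - c| ≤ 2 := fun x => (abs_sub _ _).trans <| by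
    linarith [hf.abs_mul_neg_one_pow_le_one x (dotp α x).val, abs_fhat_le_one hf α]
  calc ∑ H ∈ subspaces n h, (fhatOn f H α - c) ^ 2
        = (∑ H ∈ subspaces n h, (∑ x ∈ H, (g x - c)) ^ 2) / h ^ 2 := by
        rw [sum_div]
        exact sum_congr rfl fun H hH => by rw [hdev H hH, div_pow]
    _ ≤ 2 ^ 2 * h * #(subspaces n h) / h ^ 2 :=
        div_le_div_of_nonneg_right (sum_subspaces_sq_sum_le hw hwb) (by positivity)
    _ = 4 / h * #(subspaces n h) := by field_simp; ring

theorem stmt16_general {n : ℕ} (h : ℕ) (hpos : 0 < h)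
    (f : V n → ℝ) (hf : IsBool f) (α : V n) :
    EH n h (fun H => (fhatOn f H α - EH n h (fun H' => fhatOn f H' α)) ^ 2) ≤ 14 / h ∧
    ∀ η : ℝ, 0 < η →
      (((subspaces n h).filter fun H => 2 / h + η ≤ |fhatOn f H α - fhat f α|).card : ℝ) /
          ((subspaces n h).card : ℝ) ≤ 14 / (h * η ^ 2) := by
  set S := subspaces n h
  have hh : (0 : ℝ) < h := by exact_mod_cast hpos
  have hmsq := sum_sq_fhatOn_sub_fhat_le hpos hf α
  refine ⟨div_le_of_le_mul₀ (Nat.cast_nonneg _) (by positivity) ?_, fun η hη => ?_⟩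
  · calc _ ≤ ∑ H ∈ S, (fhatOn f H α - fhat f α) ^ 2 := sum_sq_sub_mean_le S _ _
      _ ≤ 4 / h * #S := hmsq
      _ ≤ 14 / h * #S := by gcongr; norm_num
  set T := #{H ∈ S | 2 / h + η ≤ |fhatOn f H α - fhat f α|}
  have hT : (T : ℝ) * η ^ 2 ≤ 4 / h * #S := calc
    (T : ℝ) * η ^ 2 ≤ T * (2 / h + η) ^ 2 := by gcongr; linarith [div_pos two_pos hh]
    _ ≤ ∑ H ∈ S, (fhatOn f H α - fhat f α) ^ 2 :=
        card_filter_le_abs_mul_sq_le_sum_sq S _ (by positivity)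
    _ ≤ 4 / h * #S := hmsq
  refine div_le_of_le_mul₀ (Nat.cast_nonneg _) (by positivity) ?_
  rw [div_mul_eq_mul_div, le_div_iff₀ (by positivity)]
  calc (T : ℝ) * (h * η ^ 2) = (h : ℝ) * (T * η ^ 2) := by ring
    _ ≤ (h : ℝ) * (4 / h * #S) := by gcongr
    _ = 4 * (#S : ℝ) := by field_simp
    _ ≤ 14 * #S := by gcongr; norm_num

theorem stmt16 {n : ℕ} (h : ℕ) (hpos : 0 < h) (hne : (subspaces n h).Nonempty)
    (f : V n → ℝ) (hf : IsBool f) (α : V n) :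
    EH n h (fun H => (fhatOn f H α - EH n h (fun H' => fhatOn f H' α)) ^ 2) ≤ 14 / h ∧
    ∀ η : ℝ, 0 < η →
      (((subspaces n h).filter fun H => 2 / h + η ≤ |fhatOn f H α - fhat f α|).card : ℝ) /
          ((subspaces n h).card : ℝ) ≤ 14 / (h * η ^ 2) :=
  stmt16_general h hpos f hf α
end
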